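/- Every subgroup G of B(Q_∞) satisfies G = π^{-1}(π(G)) ∩ π_d^{-1}(π_d(G)). -/

import Mathlib

def hermMul (q : ℕ) {F : Type} [Field F] (s t : F × F × F) : F × F × F :=
  (s.1 * t.1, t.1 * s.2.1 + t.2.1,
    t.1 ^ (q + 1) * s.2.2 + t.1 * t.2.1 ^ q * s.2.1 + t.2.2)

def hermSet (q : ℕ) (F : Type) [Field F] : Set (F × F × F) :=
  {s | s.1 ≠ 0 ∧ s.2.2 ^ q + s.2.2 = s.2.1 ^ (q + 1)}

def ggkMul (q : ℕ) {F E : Type} [Field F] [Field E] (s t : F × F × F × E) :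
    F × F × F × E :=
  (s.1 * t.1, t.1 * s.2.1 + t.2.1,
    t.1 ^ (q + 1) * s.2.2.1 + t.1 * t.2.1 ^ q * s.2.1 + t.2.2.1,
    s.2.2.2 * t.2.2.2)

def ggkSet (q m : ℕ) {F E : Type} [Field F] [Field E] (ι : F →+* E) :
    Set (F × F × F × E) :=
  {s | s.1 ≠ 0 ∧ s.2.2.1 ^ q + s.2.2.1 = s.2.1 ^ (q + 1) ∧ s.2.2.2 ^ m = ι s.1}

/-- restriction to the Hermitian coordinates: `(a,b,c,d) ↦ (a,b,c)`. -/
def projA {q m : ℕ} {F E : Type} [Field F] [Field E] {ι : F →+* E}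
    (x : ggkSet q m ι) : F × F × F :=
  (x.val.1, x.val.2.1, x.val.2.2.1)

/-- the map `π_d : (a,b,c,d) ↦ d`. -/
def projD {q m : ℕ} {F E : Type} [Field F] [Field E] {ι : F →+* E}
    (x : ggkSet q m ι) : E :=
  x.val.2.2.2

/-- the map `π_a : (a,b,c,d) ↦ a`. -/
def projA0 {q m : ℕ} {F E : Type} [Field F] [Field E] {ι : F →+* E}
    (x : ggkSet q m ι) : F :=
  x.val.1

/-!
If `x` agrees with `g ∈ G` in `(a, b, c)` and with `g' ∈ G` in `d`, then `g⁻¹ x = (1, 0, 0, e)`,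
and `w = g⁻¹ g' ∈ G` has the same `d`-coordinate `e`; since `d ^ m = a`, also `w = (1, b, c, e)`.
Such elements satisfy `w ^ k = (1, k b, k c + (k choose 2) b ^ (q + 1), e ^ k)`, and for
`k = |E| = p ^ (2hn)` both coefficients vanish in characteristic `p` while `e ^ k = e`.
Hence `w ^ k = g⁻¹ x`, so `x = g w ^ k ∈ G`.
-/

theorem Nat.Prime.dvd_choose_two_pow {p j : ℕ} (hp : p.Prime) (hj : 2 ≤ j) :
    p ∣ (p ^ j).choose 2 := by
  refine hp.dvd_choose_pow two_ne_zero (ne_of_lt ?_)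
  calc 2 < 2 ^ 2 := by norm_num
    _ ≤ 2 ^ j := Nat.pow_le_pow_right two_pos hj
    _ ≤ p ^ j := Nat.pow_le_pow_left hp.two_le j

section GroupLaw

variable {q m : ℕ} {F E : Type} [Field F] [Field E] {ι : F →+* E}

theorem projA0_eq_of_projD_eq {s t : ggkSet q m ι} (h : projD s = projD t) :
    projA0 s = projA0 t :=
  ι.injective <| by rw [projA0, projA0, ← s.2.2.2, ← t.2.2.2]; exact congrArg (· ^ m) h

theorem eq_of_projA_eq_of_projD_eq {s t : ggkSet q m ι} (hA : projA s = projA t)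
    (hD : projD s = projD t) : s = t := by
  simp only [projA, projD, Prod.mk.injEq] at hA hD
  exact Subtype.ext (Prod.ext hA.1 (Prod.ext hA.2.1 (Prod.ext hA.2.2 hD)))

variable [Group (ggkSet q m ι)]

theorem projA_mul (hmul : ∀ s t : ggkSet q m ι, (s * t).val = ggkMul q s.val t.val)
    (s t : ggkSet q m ι) : projA (s * t) = hermMul q (projA s) (projA t) := by
  simp only [projA, hmul, ggkMul, hermMul]

theorem projD_mul (hmul : ∀ s t : ggkSet q m ι, (s * t).val = ggkMul q s.val t.val)
    (s t : ggkSet q m ι) : projD (s * t) = projD s * projD t := by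
  simp only [projD, hmul, ggkMul]

theorem ggkSet_val_one (hmul : ∀ s t : ggkSet q m ι, (s * t).val = ggkMul q s.val t.val)
    (hm : m ≠ 0) : (1 : ggkSet q m ι).val = (1, 0, 0, 1) := by
  obtain ⟨ha, -, hd⟩ := (1 : ggkSet q m ι).2
  have hidem := hmul 1 1
  rw [mul_one] at hidem
  set u := (1 : ggkSet q m ι).val
  simp only [ggkMul, Prod.ext_iff] at hidem
  obtain ⟨h1, h2, h3, h4⟩ := hidem
  have ha1 : u.1 = 1 := (mul_eq_left₀ ha).1 h1.symm
  have hb : u.2.1 = 0 := by simpa [ha1] using h2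
  have hc : u.2.2.1 = 0 := by simpa [ha1, hb] using h3
  have hd0 : u.2.2.2 ≠ 0 := by
    rintro h0
    rw [h0, zero_pow hm, ha1, map_one] at hd
    exact zero_ne_one hd
  have hd1 : u.2.2.2 = 1 := (mul_eq_left₀ hd0).1 h4.symm
  exact Prod.ext ha1 (Prod.ext hb (Prod.ext hc hd1))

theorem projA_inv_mul_of_projA_eq
    (hmul : ∀ s t : ggkSet q m ι, (s * t).val = ggkMul q s.val t.val) (hm : m ≠ 0)
    {g x : ggkSet q m ι} (h : projA g = projA x) : projA (g⁻¹ * x) = (1, 0, 0) := by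
  rw [projA_mul hmul, ← h, ← projA_mul hmul, inv_mul_cancel, projA, ggkSet_val_one hmul hm]

theorem projD_pow (hmul : ∀ s t : ggkSet q m ι, (s * t).val = ggkMul q s.val t.val)
    (hm : m ≠ 0) (w : ggkSet q m ι) (k : ℕ) : projD (w ^ k) = projD w ^ k := by
  induction k with
  | zero => rw [pow_zero, pow_zero, projD, ggkSet_val_one hmul hm]
  | succ k ih => rw [pow_succ, pow_succ, projD_mul hmul, ih]

theorem projA_pow_of_projA0_eq_one
    (hmul : ∀ s t : ggkSet q m ι, (s * t).val = ggkMul q s.val t.val) (hm : m ≠ 0)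
    {w : ggkSet q m ι} (hw : projA0 w = 1) (k : ℕ) :
    projA (w ^ k) = (1, k * w.val.2.1, k * w.val.2.2.1 + k.choose 2 * w.val.2.1 ^ (q + 1)) := by
  induction k with
  | zero => simp [projA, ggkSet_val_one hmul hm]
  | succ k ih =>
    rw [projA0] at hw
    rw [pow_succ, projA_mul hmul, ih, Nat.choose_succ_succ', Nat.choose_one_right]
    simp only [hermMul, projA, hw]
    push_cast
    ring_nf

theorem projA_pow_eq_of_cast_eq_zero
    (hmul : ∀ s t : ggkSet q m ι, (s * t).val = ggkMul q s.val t.val) (hm : m ≠ 0)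
    {w : ggkSet q m ι} (hw : projA0 w = 1) {K : ℕ} (hK : (K : F) = 0)
    (hK2 : (K.choose 2 : F) = 0) : projA (w ^ K) = (1, 0, 0) := by
  simp [projA_pow_of_projA0_eq_one hmul hm hw, hK, hK2]

theorem mem_of_projA_eq_of_projD_eq
    (hmul : ∀ s t : ggkSet q m ι, (s * t).val = ggkMul q s.val t.val) (hm : m ≠ 0)
    {K : ℕ} (hK : (K : F) = 0) (hK2 : (K.choose 2 : F) = 0) (hKE : ∀ e : E, e ^ K = e)
    {G : Subgroup (ggkSet q m ι)} {g g' x : ggkSet q m ι} (hg : g ∈ G) (hg' : g' ∈ G)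
    (hA : projA g = projA x) (hD : projD g' = projD x) : x ∈ G := by
  have hu : projA (g⁻¹ * x) = (1, 0, 0) := projA_inv_mul_of_projA_eq hmul hm hA
  have hw : projD (g⁻¹ * g') = projD (g⁻¹ * x) := by rw [projD_mul hmul, projD_mul hmul, hD]
  have hw1 : projA0 (g⁻¹ * g') = 1 := by
    rw [projA0_eq_of_projD_eq hw, projA0]
    exact congrArg Prod.fst hu
  have hwK : (g⁻¹ * g') ^ K = g⁻¹ * x :=
    eq_of_projA_eq_of_projD_eq (by rw [projA_pow_eq_of_cast_eq_zero hmul hm hw1 hK hK2, hu])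
      (by rw [projD_pow hmul hm, hKE, hw])
  have hgw := mul_mem hg (pow_mem (mul_mem (inv_mem hg) hg') K)
  rwa [hwK, mul_inv_cancel_left] at hgw

end GroupLaw

theorem stmt14_general (p h q n m : ℕ) (hp : p.Prime) (hh : 0 < h) (hq : q = p ^ h)
    (hn1 : 1 ≤ n) (hm : m * (q + 1) = q ^ n + 1)
    (F E : Type) [Field F] [CharP F p] [Field E] [Fintype E]
    (hE : Fintype.card E = q ^ (2 * n)) (ι : F →+* E)
    [instB : Group (ggkSet q m ι)]
    (hmulB : ∀ s t : ggkSet q m ι, (s * t).val = ggkMul q s.val t.val)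
    (G : Subgroup ↥(ggkSet q m ι)) :
    (G : Set ↥(ggkSet q m ι)) =
      {x : ↥(ggkSet q m ι) |
        projA x ∈ projA '' (G : Set ↥(ggkSet q m ι)) ∧
        projD x ∈ projD '' (G : Set ↥(ggkSet q m ι))} := by
  have hm0 : m ≠ 0 := by rintro rfl; omega
  have hcard : Fintype.card E = p ^ (h * (2 * n)) := by rw [hE, hq, ← pow_mul]
  have hexp : 2 ≤ h * (2 * n) := by nlinarith
  have hK : (Fintype.card E : F) = 0 :=
    (CharP.cast_eq_zero_iff F p _).2 (hcard ▸ dvd_pow_self p (by omega))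
  have hK2 : ((Fintype.card E).choose 2 : F) = 0 :=
    (CharP.cast_eq_zero_iff F p _).2 (hcard ▸ hp.dvd_choose_two_pow hexp)
  ext x
  refine ⟨fun hx => ⟨⟨x, hx, rfl⟩, ⟨x, hx, rfl⟩⟩, ?_⟩
  rintro ⟨⟨g, hg, hA⟩, ⟨g', hg', hD⟩⟩
  exact mem_of_projA_eq_of_projD_eq hmulB hm0 hK hK2 FiniteField.pow_card hg hg' hA hD

theorem stmt14 (p h q n m : ℕ) (hp : p.Prime) (hh : 0 < h) (hq : q = p ^ h)
    (hn : Odd n) (hn1 : 1 ≤ n) (hm : m * (q + 1) = q ^ n + 1)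
    (F E : Type) [Field F] [Fintype F] [CharP F p] [Field E] [Fintype E] [CharP E p]
    (hF : Fintype.card F = q ^ 2) (hE : Fintype.card E = q ^ (2 * n)) (ι : F →+* E)
    [instB : Group (ggkSet q m ι)]
    (hmulB : ∀ s t : ggkSet q m ι, (s * t).val = ggkMul q s.val t.val)
    (G : Subgroup ↥(ggkSet q m ι)) :
    (G : Set ↥(ggkSet q m ι)) =
      {x : ↥(ggkSet q m ι) |
        projA x ∈ projA '' (G : Set ↥(ggkSet q m ι)) ∧
        projD x ∈ projD '' (G : Set ↥(ggkSet q m ι))} :=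
  stmt14_general p h q n m hp hh hq hn1 hm F E hE ι (instB := instB) hmulB G
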